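/- Given reals p > 0, q, a, a′ and b > 0, b′ > 0, define h(ξ) = (−q + (ξ/2)·a′ + (1/(2ξ))·a) / (p + (ξ/2)·b′ + (1/(2ξ))·b) for ξ > 0, and set γ = p·a + q·b, γ′ = p·a′ + q·b′, ω = (a·b′ − a′·b)/2. If γ > 0 and γ′ > 0, then ξ₊ := (ω + √(ω² + γ′γ)) / γ′ satisfies ξ₊ > 0 and h(ξ₊) ≤ h(ξ) for every ξ > 0, i.e. ξ₊ is a global minimum point of h on (0, ∞). -/

import Mathlib

/-- The function `h(ξ) = (−q + (ξ/2)a′ + (1/(2ξ))a) / (p + (ξ/2)b′ + (1/(2ξ))b)`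
whose maximization over the squeezing factor `ξ` is equivalent to the maximization of the
teleportation fidelity `F(ξ,φ) = [det Γ^tr − h(ξ)]^(−1/2)`. -/
noncomputable def hfun (p q a a' b b' : ℝ) (ξ : ℝ) : ℝ :=
  (-q + (ξ/2) * a' + (1/(2*ξ)) * a) / (p + (ξ/2) * b' + (1/(2*ξ)) * b)

lemma hfun_eq (p q a a' b b' ξ : ℝ) (hp : 0 < p) (hb : 0 < b) (hb' : 0 < b')
    (hξ : 0 < ξ) :
    hfun p q a a' b b' ξ = (a' * ξ^2 - 2*q*ξ + a) / (b' * ξ^2 + 2*p*ξ + b) := by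
  have hD : (0:ℝ) < p + (ξ/2) * b' + (1/(2*ξ)) * b := by positivity
  have hB : (0:ℝ) < b' * ξ^2 + 2*p*ξ + b := by positivity
  rw [hfun, div_eq_div_iff (ne_of_gt hD) (ne_of_gt hB)]
  field_simp
  ring

/-- Minimum case of the Appendix B classification: if `γ = p a + q b > 0` and
`γ′ = p a′ + q b′ > 0`, then `ξ₊ = (ω + √(ω² + γ′γ))/γ′` is positive and is a global
minimum point of `h` on `(0,∞)`. -/
theorem xi_plus_global_min (p q a a' b b' : ℝ)
    (hp : 0 < p) (hb : 0 < b) (hb' : 0 < b')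
    (hγ : 0 < p * a + q * b) (hγ' : 0 < p * a' + q * b') :
    let γ := p * a + q * b
    let γ' := p * a' + q * b'
    let ω := (a * b' - a' * b) / 2
    let ξp := (ω + Real.sqrt (ω ^ 2 + γ' * γ)) / γ'
    0 < ξp ∧ ∀ ξ > 0, hfun p q a a' b b' ξp ≤ hfun p q a a' b b' ξ := by
  intro γ γ' ω ξp
  have hγγ' : 0 < γ' * γ := mul_pos hγ' hγ
  set s : ℝ := Real.sqrt (ω ^ 2 + γ' * γ) with hs_def
  have hsnn : 0 ≤ s := Real.sqrt_nonneg _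
  have hs2 : s ^ 2 = ω ^ 2 + γ' * γ := Real.sq_sqrt (by nlinarith [sq_nonneg ω])
  have habs : |ω| < s := by
    rw [← Real.sqrt_sq_eq_abs]
    exact Real.sqrt_lt_sqrt (sq_nonneg _) (by linarith)
  have hωs : 0 < ω + s := by
    have := neg_abs_le ω
    linarith
  have hξp : 0 < ξp := div_pos hωs hγ'
  refine ⟨hξp, ?_⟩
  intro ξ hξ
  -- key facts about ξp
  have hx : γ' * ξp = ω + s := by
    show γ' * ((ω + s) / γ') = ω + s
    field_simp
    exact div_self (ne_of_gt hγ')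
  have hγeq : γ' * ξp ^ 2 - 2 * ω * ξp - γ = 0 := by
    have h0 : γ' * (γ' * ξp ^ 2 - 2 * ω * ξp - γ) = 0 := by
      linear_combination (γ' * ξp - ω + s) * hx + hs2
    exact (mul_eq_zero.mp h0).resolve_left (ne_of_gt hγ')
  have hsx : γ' * ξp - ω = s := by linarith [hx]
  rw [hfun_eq p q a a' b b' ξp hp hb hb' hξp, hfun_eq p q a a' b b' ξ hp hb hb' hξ]
  have hBx : (0:ℝ) < b' * ξp^2 + 2*p*ξp + b := by positivity
  have hBy : (0:ℝ) < b' * ξ^2 + 2*p*ξ + b := by positivity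
  rw [div_le_div_iff₀ hBx hBy]
  -- A(ξp)B(ξ) - A(ξ)B(ξp) = -2 (ξp-ξ)^2 s ≤ 0
  have key : (a' * ξp^2 - 2*q*ξp + a) * (b' * ξ^2 + 2*p*ξ + b)
      - (a' * ξ^2 - 2*q*ξ + a) * (b' * ξp^2 + 2*p*ξp + b)
      = -2 * (ξp - ξ)^2 * s := by
    have hident : (a' * ξp^2 - 2*q*ξp + a) * (b' * ξ^2 + 2*p*ξ + b)
        - (a' * ξ^2 - 2*q*ξ + a) * (b' * ξp^2 + 2*p*ξp + b)
        = 2 * (ξp - ξ) * (γ' * ξp * ξ - ω * (ξp + ξ) - γ) := by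
      simp only [γ, γ', ω]; ring
    rw [hident]
    have : γ' * ξp * ξ - ω * (ξp + ξ) - γ = -(ξp - ξ) * (γ' * ξp - ω) := by
      linear_combination hγeq + ξ * (0:ℝ)
    rw [this, hsx]; ring
  nlinarith [sq_nonneg (ξp - ξ), mul_nonneg (sq_nonneg (ξp - ξ)) hsnn]
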